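/- arXiv:0905.3766 — 4 statements merged into one kernel-verified Lean document; each statement's English description precedes it below -/
import Mathlib

section
/- Let S_SLO = ⟨A, max_s, min_s, MAX, 0⟩ where A is the set of sequences of length n of integers in {0, …, MAX}, max_s and min_s compare sequences lexicographically returning the lexicographically larger (resp. smaller) sequence, MAX is the constant-MAX sequence and 0 is the constant-0 sequence. Then S_SLO is a c-semiring. -/
/-- A c-semiring ⟨A, +, ×, 0, 1⟩: + is idempotent, commutative, associative with
unit 0 and absorbing element 1; × is commutative, associative, with unit 1 and
absorbing element 0, and distributes over +. -/
structure CSemiring (A : Type*) where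
  add : A → A → A
  mul : A → A → A
  zero : A
  one : A
  add_comm : ∀ a b, add a b = add b a
  add_assoc : ∀ a b c, add (add a b) c = add a (add b c)
  add_idem : ∀ a, add a a = a
  add_zero : ∀ a, add a zero = a
  add_one : ∀ a, add a one = one
  mul_comm : ∀ a b, mul a b = mul b a
  mul_assoc : ∀ a b c, mul (mul a b) c = mul a (mul b c)
  mul_one : ∀ a, mul a one = a
  mul_zero : ∀ a, mul a zero = zero
  mul_add : ∀ a b c, mul a (add b c) = add (mul a b) (mul a c)

/-- The induced order: a ≤ b iff a + b = b. -/
def CSemiring.le {A : Type*} (S : CSemiring A) (a b : A) : Prop := S.add a b = b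

instance (n : ℕ) : WellFoundedLT (Fin n) := Finite.to_wellFoundedLT

/-- The SLO structure on length-n sequences of integers in
{0,…,MAX}, with max_s and min_s the lexicographic maximum and minimum,
the constant-0 sequence as the unit of max_s and the constant-MAX sequence as
the unit of min_s, is a c-semiring. -/
theorem slo_csemiring (n MAX : ℕ) :
    ∃ S : CSemiring (Lex (Fin n → Fin (MAX + 1))),
      S.add = (fun a b => max a b) ∧ S.mul = (fun a b => min a b) ∧
      S.zero = toLex (fun _ => (0 : Fin (MAX + 1))) ∧
      S.one = toLex (fun _ => (Fin.last MAX)) := by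
  have hbot : (⊥ : Lex (Fin n → Fin (MAX + 1))) = toLex (fun _ => (0 : Fin (MAX + 1))) := rfl
  have htop : (⊤ : Lex (Fin n → Fin (MAX + 1))) = toLex (fun _ => (Fin.last MAX)) := rfl
  refine ⟨⟨(fun a b => max a b), (fun a b => min a b),
    toLex (fun _ => (0 : Fin (MAX + 1))), toLex (fun _ => (Fin.last MAX)),
    fun a b => max_comm a b, fun a b c => max_assoc a b c, fun a => max_self a,
    fun a => hbot ▸ max_eq_left bot_le,
    fun a => htop ▸ max_eq_right le_top,
    fun a b => min_comm a b, fun a b c => min_assoc a b c,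
    fun a => htop ▸ min_eq_left le_top,
    fun a => hbot ▸ min_eq_right bot_le,
    fun a b c => min_max_distrib_left a b c⟩, rfl, rfl, rfl, rfl⟩
end

section
/- Asymmetry implies satisfiability but not conversely: there exists a set of conditional preference statements over boolean features whose induced preference relation is not asymmetric (contains a cycle) but which nevertheless admits an undominated outcome. Concretely, for Ω = {a : b ≻ ¬b, a ∧ c : ¬b ≻ b} over boolean variables a, b, c with flipping-one-variable semantics, the induced relation has a 2-cycle between abc and a¬bc, yet the outcome a¬cb (a true, c false, b true) is undominated. -/
/-- Outcomes are complete assignments to the boolean variables a, b, c,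
encoded as triples (a, b, c). The preference relation induced by
Ω = {a : b ≻ ¬b,  a ∧ c : ¬b ≻ b} with flipping-one-variable semantics:
two outcomes agreeing on a and c and differing in b are related, the one with
the preferred value of b dominating the other, whenever the corresponding
condition holds. -/
def dominates (o o' : Bool × Bool × Bool) : Prop :=
  o.1 = o'.1 ∧ o.2.2 = o'.2.2 ∧
    ((o.1 = true ∧ o.2.1 = true ∧ o'.2.1 = false) ∨
     (o.1 = true ∧ o.2.2 = true ∧ o.2.1 = false ∧ o'.2.1 = true))

/-- The preference relation induced by Ω is not asymmetric:
it has a 2-cycle between abc and a¬bc; nevertheless the outcome with a true,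
b true, c false is undominated. So asymmetry implies satisfiability but not
conversely. -/
theorem not_asymmetric_but_satisfiable :
    dominates (true, true, true) (true, false, true) ∧
    dominates (true, false, true) (true, true, true) ∧
    ∀ o : Bool × Bool × Bool, ¬ dominates o (true, true, false) := by
  refine ⟨⟨rfl, rfl, Or.inl ⟨rfl, rfl, rfl⟩⟩, ⟨rfl, rfl, Or.inr ⟨rfl, rfl, rfl, rfl⟩⟩, ?_⟩
  rintro ⟨a, b, c⟩ ⟨h1, h2, h3 | h3⟩ <;> simp_all [dominates]
end

section
/- Information preservation for the min+ approximation in a single flip: let X be a node of an acyclic CP-net with weights computed by the SC-net algorithm (w(X) = Σ_{Y : X ∈ Pa(Y)} w(Y)·|D(Y)|, or 1 for sinks), and suppose each soft constraint assigns penalty in {0,…,|D(Z)|−1} to the value of its variable Z. If two outcomes α, β agree everywhere except that on X α takes a value with strictly smaller penalty (given their common assignment to Pa(X)) than β's value, then the total weighted penalty of α is strictly smaller than that of β. -/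
open Finset in
/-- Information preservation for the min+ approximation in a
single flip. Features V with domains D, parent sets Pa, domain sizes d v ≥ 2,
soft-constraint penalties p v (depending only on the values of Pa(v) ∪ {v},
and bounded by d v − 1), and SC-net weights w satisfying
w(X) > Σ_{Y : X ∈ Pa(Y)} w(Y)·(d(Y) − 1). If outcomes α and β agree everywhere
except at X, where α's value has strictly smaller penalty than β's, then the
total weighted penalty of α is strictly smaller than that of β. -/
theorem minplus_single_flip {V : Type*} [Fintype V] [DecidableEq V]
    (D : V → Type*) (Pa : V → Finset V)
    (d w : V → ℕ) (hd : ∀ v, 2 ≤ d v)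
    (p : ∀ _ : V, (∀ u : V, D u) → ℕ)
    (hbound : ∀ v o, p v o ≤ d v - 1)
    (hlocal : ∀ v (o o' : ∀ u, D u),
      (∀ u ∈ insert v (Pa v), o u = o' u) → p v o = p v o')
    (hw : ∀ x, (∑ y ∈ univ.filter (fun y => x ∈ Pa y), w y * (d y - 1)) < w x)
    (X : V) (α β : ∀ u, D u)
    (hagree : ∀ u, u ≠ X → α u = β u)
    (hflip : p X α < p X β) :
    (∑ v, w v * p v α) < (∑ v, w v * p v β) := by
  classical
  set P : V → Prop := fun y => y = X ∨ X ∈ Pa y with hP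
  have hsplit : ∀ γ : ∀ u, D u, (∑ v, w v * p v γ) =
      (∑ v ∈ univ.filter P, w v * p v γ) +
      (∑ v ∈ univ.filter (fun y => ¬ P y), w v * p v γ) := fun γ =>
    (Finset.sum_filter_add_sum_filter_not univ P _).symm
  rw [hsplit α, hsplit β]
  have heq : (∑ v ∈ univ.filter (fun y => ¬ P y), w v * p v α) =
      (∑ v ∈ univ.filter (fun y => ¬ P y), w v * p v β) := by
    apply Finset.sum_congr rfl
    intro v hv
    simp only [Finset.mem_filter, hP] at hv
    push_neg at hv
    congr 1
    apply hlocal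
    intro u hu
    apply hagree
    rintro rfl
    rcases Finset.mem_insert.mp hu with h | h
    · exact hv.2.1 h.symm
    · exact hv.2.2 h
  rw [heq]
  apply Nat.add_lt_add_right
  have hXmem : X ∈ univ.filter P := by simp [hP]
  rw [← Finset.add_sum_erase _ _ hXmem, ← Finset.add_sum_erase _ _ hXmem]
  have h1 : (∑ v ∈ (univ.filter P).erase X, w v * p v α) ≤
      ∑ y ∈ univ.filter (fun y => X ∈ Pa y), w y * (d y - 1) := by
    apply le_trans (Finset.sum_le_sum (fun v _ =>
      Nat.mul_le_mul_left (w v) (hbound v α)))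
    apply Finset.sum_le_sum_of_subset
    intro y hy
    simp only [Finset.mem_erase, Finset.mem_filter, hP] at hy ⊢
    exact ⟨Finset.mem_univ y, hy.2.2.resolve_left hy.1⟩
  have h2 : w X * p X α + w X ≤ w X * p X β := by
    calc w X * p X α + w X = w X * (p X α + 1) := by ring
    _ ≤ w X * p X β := Nat.mul_le_mul_left _ hflip
  calc w X * p X α + ∑ v ∈ (univ.filter P).erase X, w v * p v α
      < w X * p X α + w X := by
        exact Nat.add_lt_add_left (lt_of_le_of_lt h1 (hw X)) _
    _ ≤ w X * p X β := h2
    _ ≤ w X * p X β + ∑ v ∈ (univ.filter P).erase X, w v * p v β :=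
        Nat.le_add_right _ _
end

section
/- Size bound for the SC-net: if a CP-net has n feature nodes and e edges, then its SC-net has at most 2n variable nodes and at most e + n constraint edges (hard and soft combined). -/
open Finset in
/-- Size bound for the SC-net. If a CP-net has n feature nodes
and e edges (e = Σ_X |Pa(X)|), then its SC-net has at most 2n variable nodes
(one node V_X per feature plus one node V_{Pa(X)} per feature with ≥ 2
parents) and at most e + n constraint edges (one soft constraint per feature
plus one hard constraint between V_{Pa(X)} and each parent of X, for each X
with ≥ 2 parents). -/
theorem scnet_size_bound {V : Type*} [Fintype V] [DecidableEq V]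
    (Pa : V → Finset V) (n e : ℕ)
    (hn : Fintype.card V = n) (he : e = ∑ X, (Pa X).card) :
    (n + (univ.filter (fun X : V => 2 ≤ (Pa X).card)).card ≤ 2 * n) ∧
    (n + ∑ X ∈ univ.filter (fun X : V => 2 ≤ (Pa X).card), (Pa X).card ≤ e + n) := by
  constructor
  · have h := (card_filter_le univ (fun X : V => 2 ≤ (Pa X).card))
    simp only [card_univ, hn] at h
    omega
  · have h : ∑ X ∈ univ.filter (fun X : V => 2 ≤ (Pa X).card), (Pa X).card ≤ e := by
      rw [he]
      exact Finset.sum_le_sum_of_subset (filter_subset _ _)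
    omega
end
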